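/- For all n ≥ 2, μ*(n,2) = 2·⌈n/3⌉, where μ*(n,2) is the minimum over all n×n matrices W over 𝔽₂ with all diagonal entries 1 and each column having Hamming weight exactly 2, of the maximum over x ∈ 𝔽₂ⁿ of the Hamming weight of W·x. In particular μ*(n,2) is the least even integer ≥ ⌈2n/3⌉. -/

import Mathlib

/-!
Upper bound: if `σ` is a fixed-point-free permutation, `W = 1 + P_σ` has unit diagonal and
columns of weight two, and `(W x)ᵢ = xᵢ + x_{σ i}`. On every cycle of `σ` these entries sum
to zero, so each cycle carries an even number of nonzero entries; with cycles of length 2 or 3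
that is at most two per cycle, and `⌈n/3⌉` such cycles suffice to cover `n ≥ 2` points.

Lower bound: column `j` of `W` is `e_j + e_{f j}` with `f j ≠ j`. In the quotient of `𝔽₂ⁿ` by
the column space, `e_u` is therefore constant on the classes of the equivalence generated by
`u ~ f u`, so the indicator of any set meeting every class evenly lies in the image of `W`.
Every class has at least two elements; keeping `2⌊c/2⌋` points of a class of size `c` gives
a set of size `2m` with `n ≤ 3m`.
-/

/-- `μ*(n,m)`: minimum over matrices with unit diagonal and column weights
exactly `m` of `max_x |W·x|`. -/
noncomputable def muStar (n m : ℕ) : ℕ :=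
  sInf {k : ℕ | ∃ W : Matrix (Fin n) (Fin n) (ZMod 2),
    (∀ i, W i i = 1) ∧ (∀ j, hammingNorm (fun i => W i j) = m) ∧
    k = Finset.univ.sup fun x : Fin n → ZMod 2 => hammingNorm (W.mulVec x)}

open Finset Equiv
open scoped Matrix

section ZModTwo

variable {α : Type*}

lemma ZMod.eq_one_of_ne_zero_two {a : ZMod 2} (ha : a ≠ 0) : a = 1 := by
  revert a; decide

lemma natCast_card_filter_ne_zero (s : Finset α) (v : α → ZMod 2) :
    (#{i ∈ s | v i ≠ 0} : ZMod 2) = ∑ i ∈ s, v i := by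
  rw [← sum_filter_ne_zero, card_eq_sum_ones, Nat.cast_sum, Nat.cast_one]
  exact sum_congr rfl fun i hi => (ZMod.eq_one_of_ne_zero_two (mem_filter.1 hi).2).symm

lemma hammingNorm_sum_pi_single_one [Fintype α] [DecidableEq α] {R : Type*}
    [AddCommMonoidWithOne R] [DecidableEq R] [NeZero (1 : R)] (T : Finset α) :
    hammingNorm (∑ i ∈ T, Pi.single i (1 : R)) = #T := by
  unfold hammingNorm
  congr 1
  ext i
  simp [Finset.sum_apply, Finset.sum_pi_single]

lemma eq_sum_pi_single_of_ne_zero [Fintype α] [DecidableEq α] (v : α → ZMod 2) :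
    v = ∑ i with v i ≠ 0, Pi.single i 1 := by
  ext i
  rw [Finset.sum_apply, Finset.sum_pi_single]
  by_cases hi : v i = 0
  · simp [hi]
  · simp [ZMod.eq_one_of_ne_zero_two hi]

lemma exists_eq_pi_single_add_pi_single [Fintype α] [DecidableEq α] {v : α → ZMod 2} {j : α}
    (hj : v j = 1) (hv : hammingNorm v = 2) : ∃ a ≠ j, v = Pi.single j 1 + Pi.single a 1 := by
  obtain ⟨a, b, hab, hsupp⟩ := card_eq_two.1 hv
  have hj' : j ∈ ({a, b} : Finset α) := by
    rw [← hsupp]; simp [hj]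
  rw [eq_sum_pi_single_of_ne_zero v, hsupp]
  rcases mem_insert.1 hj' with rfl | hjb
  · exact ⟨b, hab.symm, sum_pair hab⟩
  · rw [mem_singleton.1 hjb, pair_comm]
    exact ⟨a, hab, sum_pair hab.symm⟩

lemma even_card_filter_add_comp_ne_zero (σ : Perm α) {s : Finset α} (hs : ∀ i ∈ s, σ i ∈ s)
    (x : α → ZMod 2) : Even #{i ∈ s | x i + x (σ i) ≠ 0} := by
  have hσs : s.map σ.toEmbedding = s := map_eq_of_subset fun _ hi => by
    obtain ⟨j, hj, rfl⟩ := mem_map.1 hi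
    exact hs j hj
  have hsum : ∑ i ∈ s, x (σ i) = ∑ i ∈ s, x i := by
    conv_rhs => rw [← hσs, sum_map]
    rfl
  rw [← ZMod.natCast_eq_zero_iff_even, natCast_card_filter_ne_zero, sum_add_distrib, hsum,
    CharTwo.add_self_eq_zero]

end ZModTwo

namespace Equiv.Perm

variable {α R : Type*} [DecidableEq α]

lemma hammingNorm_add_comp_le [Fintype α] (σ : Perm α) (hσ : ∀ k ∈ σ.cycleType, k ≤ 3)
    (x : α → ZMod 2) : hammingNorm (x + x ∘ σ) ≤ 2 * Multiset.card σ.cycleType := by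
  have hsupp : ∀ i, x i + x (σ i) ≠ 0 → σ.cycleOf i ∈ σ.cycleFactorsFinset := fun i hi =>
    cycleOf_mem_cycleFactorsFinset_iff.2 <| mem_support.2 fun hfix => hi <| by
      rw [hfix, CharTwo.add_self_eq_zero]
  have hfiber : ∀ c ∈ σ.cycleFactorsFinset,
      #{i | x i + x (σ i) ≠ 0 ∧ σ.cycleOf i = c} ≤ 2 := by
    intro c hc
    have hle : #{i | x i + x (σ i) ≠ 0 ∧ σ.cycleOf i = c} ≤ #c.support := by
      refine card_le_card fun i hi => ?_
      obtain ⟨hne, rfl⟩ := (mem_filter.1 hi).2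
      exact mem_support_cycleOf_iff.2
        ⟨SameCycle.refl _ _, cycleOf_mem_cycleFactorsFinset_iff.1 (hsupp i hne)⟩
    have h3 : #c.support ≤ 3 := hσ _ <| by
      rw [cycleType_def]; exact Multiset.mem_map_of_mem _ hc
    have heven := even_card_filter_add_comp_ne_zero σ (s := {i | σ.cycleOf i = c})
      (fun i hi => by simpa [cycleOf_self_apply] using hi) x
    rw [filter_filter, filter_congr fun _ _ => and_comm] at heven
    obtain ⟨k, hk⟩ := heven
    omega
  calc hammingNorm (x + x ∘ σ)
      = ∑ c ∈ σ.cycleFactorsFinset, #{i | x i + x (σ i) ≠ 0 ∧ σ.cycleOf i = c} := by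
        simp only [hammingNorm, Pi.add_apply, Function.comp_apply]
        rw [card_eq_sum_card_fiberwise (f := σ.cycleOf) fun i hi => hsupp i (mem_filter.1 hi).2]
        simp only [filter_filter]
    _ ≤ ∑ _c ∈ σ.cycleFactorsFinset, 2 := sum_le_sum hfiber
    _ = 2 * Multiset.card σ.cycleType := by
        rw [sum_const, smul_eq_mul, mul_comm, cycleType_def, Multiset.card_map]; rfl

lemma one_add_permMatrix_apply_self [Fintype α] [AddMonoidWithOne R] {σ : Perm α}
    (hσ : σ.support = univ) (i : α) : (1 + σ.permMatrix R) i i = 1 := by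
  have : σ i ≠ i := mem_support.1 (hσ ▸ mem_univ i)
  simp [Perm.permMatrix, PEquiv.toMatrix_apply, this]

lemma col_one_add_permMatrix [AddMonoidWithOne R] (σ : Perm α) (j : α) :
    (1 + σ.permMatrix R).col j = Pi.single j 1 + Pi.single (σ.symm j) 1 := by
  ext i
  simp [Matrix.one_apply, Perm.permMatrix, PEquiv.toMatrix_apply, Pi.single_apply,
    eq_symm_apply, eq_comm]

lemma hammingNorm_col_one_add_permMatrix [Fintype α] {σ : Perm α} (hσ : σ.support = univ)
    (j : α) : hammingNorm ((1 + σ.permMatrix (ZMod 2)).col j) = 2 := by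
  have hfix : σ (σ.symm j) ≠ σ.symm j := mem_support.1 (hσ ▸ mem_univ _)
  have hne : j ≠ σ.symm j := fun h => hfix (by rw [apply_symm_apply]; exact h)
  rw [col_one_add_permMatrix, ← sum_pair (f := fun i => Pi.single i (1 : ZMod 2)) hne,
    hammingNorm_sum_pi_single_one, card_pair hne]

lemma one_add_permMatrix_mulVec [Fintype α] [CommRing R] (σ : Perm α) (x : α → R) :
    (1 + σ.permMatrix R) *ᵥ x = x + x ∘ σ := by
  rw [Matrix.add_mulVec, Matrix.one_mulVec, Matrix.permMatrix_mulVec]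

theorem exists_support_eq_univ_cycleType_le_three {n : ℕ} (hn : 2 ≤ n) :
    ∃ σ : Perm (Fin n), σ.support = univ ∧ (∀ k ∈ σ.cycleType, k ≤ 3) ∧
      Multiset.card σ.cycleType = (n + 2) / 3 := by
  set p := (3 - n % 3) % 3
  set q := (n - 2 * p) / 3
  have hpq : 2 * p + 3 * q = n := by omega
  obtain ⟨σ, hσ⟩ := (exists_with_cycleType_iff (α := Fin n)
    (m := Multiset.replicate p 2 + Multiset.replicate q 3)).2 ⟨by simp; omega, by
      simp only [Multiset.mem_add, Multiset.mem_replicate]; omega⟩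
  refine ⟨σ, eq_univ_of_card _ ?_, fun k hk => ?_, ?_⟩
  · rw [← sum_cycleType, hσ, Fintype.card_fin]; simp; omega
  · rw [hσ, Multiset.mem_add, Multiset.mem_replicate, Multiset.mem_replicate] at hk; omega
  · rw [hσ]; simp; omega

end Equiv.Perm

section LowerBound

variable {α K : Type*}

lemma sum_comp_eq_zero_of_even_card_fiber {M : Type*} [AddCommGroup M] [Module (ZMod 2) M]
    [DecidableEq K] (T : Finset α) (κ : α → K) (ψ : K → M)
    (hT : ∀ c, Even #{i ∈ T | κ i = c}) : ∑ i ∈ T, ψ (κ i) = 0 := by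
  rw [Finset.sum_comp]
  refine sum_eq_zero fun c _ => ?_
  rw [← Nat.cast_smul_eq_nsmul (ZMod 2), (ZMod.natCast_eq_zero_iff_even).2 (hT c), zero_smul]

lemma exists_even_card_fiber [Fintype α] [Fintype K] [DecidableEq K] (κ : α → K)
    (hκ : ∀ a, 2 ≤ #{b | κ b = κ a}) :
    ∃ (T : Finset α) (m : ℕ), #T = 2 * m ∧ Fintype.card α ≤ 3 * m ∧
      ∀ c, Even #{i ∈ T | κ i = c} := by
  classical
  have hE : ∀ c, ∃ E ⊆ ({b | κ b = c} : Finset α), #E = 2 * (#{b | κ b = c} / 2) :=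
    fun c => exists_subset_card_eq (by omega)
  choose E hEsub hEcard using hE
  set T : Finset α := {i | i ∈ E (κ i)}
  have hTfiber : ∀ c, {i ∈ T | κ i = c} = E c := by
    intro c
    ext i
    simp only [T, mem_filter, mem_univ, true_and]
    constructor
    · rintro ⟨hi, rfl⟩; exact hi
    · intro hi
      have hc : κ i = c := by simpa using hEsub c hi
      exact ⟨hc ▸ hi, hc⟩
  refine ⟨T, ∑ c, #{b | κ b = c} / 2, ?_, ?_, fun c => ?_⟩
  · rw [card_eq_sum_card_fiberwise (fun i _ => mem_univ (κ i)), mul_sum]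
    exact sum_congr rfl fun c _ => by rw [hTfiber, hEcard]
  · rw [← card_univ, card_eq_sum_card_fiberwise (fun i _ => mem_univ (κ i)), mul_sum]
    refine sum_le_sum fun c _ => ?_
    rcases eq_empty_or_nonempty ({b | κ b = c} : Finset α) with h | ⟨a, ha⟩
    · simp [h]
    · have := hκ a
      rw [(mem_filter.1 ha).2] at this
      omega
  · rw [hTfiber, hEcard]; exact even_two_mul _

lemma sum_pi_single_mem_of_even_card_fiber [DecidableEq α] {r : α → α → Prop}
    [DecidableEq (Quot r)] {S : Submodule (ZMod 2) (α → ZMod 2)}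
    (hS : ∀ u v, r u v → Pi.single u 1 + Pi.single v 1 ∈ S)
    (T : Finset α) (hT : ∀ c, Even #{i ∈ T | Quot.mk r i = c}) :
    ∑ i ∈ T, Pi.single i 1 ∈ S := by
  let ψ : Quot r → (α → ZMod 2) ⧸ S :=
    Quot.lift (fun u => S.mkQ (Pi.single u 1)) fun u v huv => by
      rw [← sub_eq_zero, ← map_sub, Submodule.mkQ_apply, Submodule.Quotient.mk_eq_zero,
        ZModModule.sub_eq_add]
      exact hS u v huv
  rw [← Submodule.Quotient.mk_eq_zero, ← Submodule.mkQ_apply, map_sum]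
  exact sum_comp_eq_zero_of_even_card_fiber T (Quot.mk r) ψ hT

lemma exists_hammingNorm_mulVec_eq_two_mul [Fintype α] [DecidableEq α] {W : Matrix α α (ZMod 2)}
    (hdiag : ∀ i, W i i = 1) (hcol : ∀ j, hammingNorm (W.col j) = 2) :
    ∃ (x : α → ZMod 2) (m : ℕ), hammingNorm (W *ᵥ x) = 2 * m ∧ Fintype.card α ≤ 3 * m := by
  choose f hf hcolf using fun j =>
    exists_eq_pi_single_add_pi_single (v := W.col j) (hdiag j) (hcol j)
  set r : α → α → Prop := fun u v => f u = v
  have : Fintype (Quot r) := Fintype.ofFinite _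
  classical
  have hpair (a : α) : ({a, f a} : Finset α) ⊆ ({b | Quot.mk r b = Quot.mk r a} : Finset α) := by
    simp [insert_subset_iff, (Quot.sound (r := r) rfl).symm]
  obtain ⟨T, m, hTm, hm, hT⟩ := exists_even_card_fiber (Quot.mk r) fun a =>
    (card_pair (hf a).symm).symm.trans_le (card_le_card (hpair a))
  have hrange : ∑ i ∈ T, Pi.single i 1 ∈ LinearMap.range W.mulVecLin := by
    rw [Matrix.range_mulVecLin]
    refine sum_pi_single_mem_of_even_card_fiber (fun u _ hu => ?_) T hT
    rw [← hu, ← hcolf]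
    exact Submodule.subset_span ⟨u, rfl⟩
  obtain ⟨x, hx⟩ := hrange
  refine ⟨x, m, ?_, hm⟩
  rw [← Matrix.mulVecLin_apply, hx, hammingNorm_sum_pi_single_one, hTm]

end LowerBound

/-- `μ*(n,2) = 2⌈n/3⌉`. -/
theorem muStar_n_two (n : ℕ) (hn : 2 ≤ n) : muStar n 2 = 2 * ((n + 2) / 3) := by
  obtain ⟨σ, hσ, hσ3, hcard⟩ := Perm.exists_support_eq_univ_cycleType_le_three hn
  have hdiag := Perm.one_add_permMatrix_apply_self (R := ZMod 2) hσ
  have hcol := Perm.hammingNorm_col_one_add_permMatrix hσ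
  apply le_antisymm
  · calc muStar n 2 ≤ univ.sup fun x => hammingNorm ((1 + σ.permMatrix (ZMod 2)) *ᵥ x) :=
          Nat.sInf_le ⟨_, hdiag, hcol, rfl⟩
      _ ≤ 2 * ((n + 2) / 3) := Finset.sup_le fun x _ => by
          rw [Perm.one_add_permMatrix_mulVec, ← hcard]
          exact σ.hammingNorm_add_comp_le hσ3 x
  · refine le_csInf ⟨_, _, hdiag, hcol, rfl⟩ ?_
    rintro k ⟨W, hWdiag, hWcol, rfl⟩
    obtain ⟨x, m, hx, hm⟩ := exists_hammingNorm_mulVec_eq_two_mul hWdiag hWcol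
    rw [Fintype.card_fin] at hm
    calc 2 * ((n + 2) / 3) ≤ hammingNorm (W *ᵥ x) := by omega
      _ ≤ _ := le_sup (f := fun x => hammingNorm (W *ᵥ x)) (mem_univ x)
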